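/- arXiv:1104.3160 — 3 statements merged into one kernel-verified Lean document; each statement's English description precedes it below -/
import Mathlib

section
/- If I(M,K) denotes the maximum number of orthants of R^M intersected by a K-dimensional subspace, then I(M,K) ≤ (2M/K)·I(M-1, K-1) for K ≥ 2, and combining with I(M,1) = 2 this gives I(M,K) ≤ (2^K/(M-K+1))·C(M,K). -/
/-- The set of (sign patterns of) orthants of `ℝ^M` nontrivially intersected by a set. -/
def intersectedOrthants (M : ℕ) (S : Submodule ℝ (Fin M → ℝ)) : Set (Fin M → Bool) :=
  {z | ∃ x ∈ S, x ≠ 0 ∧ ∀ i, (z i = true ↔ 0 < x i)}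

/-- `I(M, K)`: the maximum number of orthants of `ℝ^M` intersected by a
`K`-dimensional linear subspace. -/
noncomputable def maxOrthants (M K : ℕ) : ℕ :=
  sSup {n | ∃ S : Submodule ℝ (Fin M → ℝ),
    Module.finrank ℝ S = K ∧ n = (intersectedOrthants M S).ncard}

/-!
Both inequalities reduce to inequalities between binomial sums through Cover's count
`I(M, K) = 2 ∑_{j < K} C(M - 1, j)`.

Upper bound: a `K`-dimensional subspace is a space `V` with `M` functionals `f 0, …, f (M - 1)`.
A sign pattern of `f 1, …, f (M - 1)` extends to one or two patterns of `f`, and those that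
extend both ways are patterns of the restrictions to the hyperplane `ker (f 0)`, of dimension
`K - 1`; this gives Pascal's recursion for the count.

Lower bound: the values at `0, …, M - 1` of the polynomials of degree `< K` form a
`K`-dimensional subspace, and `± ∏_{l ∈ s} (X - (l + 1/2))` with `#s < K` realises every sign
sequence whose sign changes lie at the positions `s`.
-/

open Module

open Finset in
def coverNumber (m k : ℕ) : ℕ := 2 * ∑ j ∈ range k, (m - 1).choose j

namespace coverNumber
open Finset

variable {m n k : ℕ}

@[simp] lemma zero_right (m : ℕ) : coverNumber m 0 = 0 := by simp [coverNumber]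

@[simp] lemma one_right (m : ℕ) : coverNumber m 1 = 2 := by simp [coverNumber]

lemma le_succ_left (m k : ℕ) : coverNumber m k ≤ coverNumber (m + 1) k := by
  unfold coverNumber
  gcongr
  exact m.le_succ

lemma two_pow_le (hmk : m ≤ k) (hk : 0 < k) : 2 ^ m ≤ coverNumber m k := by
  rcases m with _ | m
  · obtain ⟨k, rfl⟩ := Nat.exists_eq_add_of_lt hk
    simp [coverNumber, sum_range_succ']
  · rw [pow_succ', coverNumber, Nat.add_sub_cancel, ← Nat.sum_range_choose]
    gcongr

lemma succ_succ (hn : 0 < n) (k : ℕ) :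
    coverNumber (n + 1) (k + 1) = coverNumber n (k + 1) + coverNumber n k := by
  obtain ⟨n, rfl⟩ := Nat.exists_eq_add_of_lt hn
  simp only [coverNumber, Nat.add_sub_cancel, zero_add]
  rw [sum_range_succ', sum_range_succ' (fun j => n.choose j)]
  simp only [Nat.choose_succ_succ', sum_add_distrib, Nat.choose_zero_right]
  ring

lemma succ_succ_eq_two_mul_add (hn : 0 < n) (k : ℕ) :
    coverNumber (n + 1) (k + 1) = 2 * coverNumber n k + 2 * (n - 1).choose k := by
  rw [succ_succ hn, coverNumber, sum_range_succ]
  unfold coverNumber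
  ring

lemma mul_succ_succ_le (hk : 0 < k) (hkm : k ≤ m) :
    (k + 1) * coverNumber (m + 1) (k + 1) ≤ 2 * (m + 1) * coverNumber m k := by
  obtain ⟨k, rfl⟩ : ∃ k', k = k' + 1 := ⟨k - 1, by omega⟩
  obtain ⟨d, rfl⟩ := Nat.exists_eq_add_of_le hkm
  have hm : k + 1 + d - 1 = k + d := by omega
  have hS : (k + d).choose k ≤ ∑ j ∈ range (k + 1), (k + d).choose j :=
    single_le_sum (fun _ _ => Nat.zero_le _) (self_mem_range_succ k)
  have hch : (k + d).choose (k + 1) * (k + 1) = (k + d).choose k * d := by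
    simpa using Nat.choose_succ_right_eq (k + d) k
  have hnext : (k + 2) * (k + d).choose (k + 1) ≤ 2 * ((k + d).choose k * d) := by
    rw [← hch]; nlinarith
  rw [succ_succ_eq_two_mul_add (by omega)]
  simp only [coverNumber, hm]
  nlinarith [Nat.mul_le_mul_right d hS]

end coverNumber

section SignPatterns

variable {V : Type*} [AddCommGroup V] [Module ℝ V] {m n : ℕ}

noncomputable def signPattern (f : Fin m → Dual ℝ V) (v : V) : Fin m → Bool :=
  fun i => decide (0 < f i v)

def signPatterns (f : Fin m → Dual ℝ V) : Set (Fin m → Bool) := signPattern f '' {0}ᶜ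

def restrictKer (f : Fin (n + 1) → Dual ℝ V) : Fin n → Dual ℝ (LinearMap.ker (f 0)) :=
  fun j => (f j.succ).domRestrict _

lemma signPatterns_eq_empty [FiniteDimensional ℝ V] (hV : finrank ℝ V = 0)
    (f : Fin m → Dual ℝ V) :
    signPatterns f = ∅ := by
  have := finrank_zero_iff.mp hV
  simp only [signPatterns, Set.image_eq_empty, Set.compl_empty_iff]
  exact Set.eq_univ_of_forall fun v => Subsingleton.elim v 0

lemma ncard_le_two_pow (A : Set (Fin m → Bool)) : A.ncard ≤ 2 ^ m := by
  simpa using Set.ncard_le_card A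

lemma ncard_eq_ncard_image_tail_add (A : Set (Fin (n + 1) → Bool)) :
    A.ncard = (Fin.tail '' A).ncard + {z | ∀ b, Fin.cons b z ∈ A}.ncard := by
  set T := {z : Fin n → Bool | Fin.cons true z ∈ A}
  set F := {z : Fin n → Bool | Fin.cons false z ∈ A}
  have hA : A = Fin.cons true '' T ∪ Fin.cons false '' F := by
    ext z
    rw [← Fin.cons_self_tail z]
    cases z 0 <;> simp [T, F, Fin.cons_right_injective _ |>.eq_iff]
  have hdisj :
      Disjoint (Fin.cons true '' T : Set (Fin (n + 1) → Bool)) (Fin.cons false '' F) := by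
    rw [Set.disjoint_left]
    rintro _ ⟨_, _, rfl⟩ ⟨_, _, h⟩
    simpa using congrFun h 0
  have himage : Fin.tail '' A = T ∪ F := by
    rw [hA, Set.image_union, Set.image_image, Set.image_image]
    simp
  have hboth : {z | ∀ b, Fin.cons b z ∈ A} = T ∩ F := by
    ext z
    simp [T, F, Bool.forall_bool, and_comm]
  rw [himage, hboth, Set.ncard_union_add_ncard_inter, hA, Set.ncard_union_eq hdisj,
    Set.ncard_image_of_injective _ (Fin.cons_right_injective _),
    Set.ncard_image_of_injective _ (Fin.cons_right_injective _)]

lemma signPattern_eq_iff {f : Fin m → Dual ℝ V} {v : V} {z : Fin m → Bool} :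
    signPattern f v = z ↔ ∀ i, (z i = true ↔ 0 < f i v) := by
  simp only [funext_iff, signPattern]
  exact forall_congr' fun i => by cases z i <;> simp

lemma image_tail_signPatterns_subset (f : Fin (n + 1) → Dual ℝ V) :
    Fin.tail '' signPatterns f ⊆ signPatterns (Fin.tail f) := by
  rintro _ ⟨_, ⟨v, hv, rfl⟩, rfl⟩
  exact ⟨v, hv, rfl⟩

lemma setOf_forall_cons_mem_subset_image_tail (A : Set (Fin (n + 1) → Bool)) :
    {z | ∀ b, Fin.cons b z ∈ A} ⊆ Fin.tail '' A :=
  fun _ hz => ⟨_, hz true, Fin.tail_cons _ _⟩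

lemma setOf_forall_cons_mem_signPatterns_eq_empty {f : Fin (n + 1) → Dual ℝ V}
    (h0 : f 0 = 0) :
    {z | ∀ b, Fin.cons b z ∈ signPatterns f} = ∅ := by
  refine Set.eq_empty_of_forall_notMem fun z hz => ?_
  obtain ⟨v, -, hv⟩ := hz true
  simpa [signPattern, h0] using congrFun hv 0

lemma setOf_forall_cons_mem_signPatterns_subset (f : Fin (n + 1) → Dual ℝ V)
    (hf : ∀ u, (∀ j : Fin n, f j.succ u = 0) → f 0 u = 0) :
    {z | ∀ b, Fin.cons b z ∈ signPatterns f} ⊆ signPatterns (restrictKer f) := by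
  intro z hz
  obtain ⟨v₁, -, h₁⟩ := hz true
  obtain ⟨v₂, hv₂, h₂⟩ := hz false
  rw [signPattern_eq_iff, Fin.forall_fin_succ] at h₁ h₂
  simp only [Fin.cons_zero, Fin.cons_succ, Bool.false_eq_true, false_iff, not_lt,
    true_iff] at h₁ h₂
  obtain ⟨hpos, h₁⟩ := h₁
  obtain ⟨hnonpos, h₂⟩ := h₂
  -- `w` is where the segment from `v₂` to `v₁` meets `ker (f 0)`. If `w = 0`, then `v₂` is a
  -- nonpositive multiple of `v₁` with the same signs, so the other functionals vanish on `v₂`;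
  -- then `hf` gives `f 0 v₂ = 0`, and `w = 0` forces `v₂ = 0`.
  set w := (-f 0 v₂) • v₁ + f 0 v₁ • v₂
  have hw0 : f 0 w = 0 := by simp [w]; ring
  have hwz : ∀ j : Fin n, (z j = true ↔ 0 < f j.succ w) := by
    intro j
    have hw : f j.succ w = -f 0 v₂ * f j.succ v₁ + f 0 v₁ * f j.succ v₂ := by simp [w]
    rw [hw]
    cases hz : z j
    · have := (h₁ j).not.mp (by simp [hz]); have := (h₂ j).not.mp (by simp [hz])
      simp only [Bool.false_eq_true, false_iff, not_lt]
      nlinarith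
    · have := (h₁ j).mp hz; have := (h₂ j).mp hz
      simp only [true_iff]
      nlinarith
  refine ⟨⟨w, hw0⟩, fun hw => hv₂ ?_, signPattern_eq_iff.mpr hwz⟩
  replace hw : w = 0 := congrArg Subtype.val hw
  have hv₂ker : ∀ j : Fin n, f j.succ v₂ = 0 := by
    intro j
    have h := congrArg (f j.succ) hw
    simp only [w, map_add, map_smul, smul_eq_mul, map_zero] at h
    cases hz : z j
    · have := (h₁ j).not.mp (by simp [hz]); have := (h₂ j).not.mp (by simp [hz])
      nlinarith
    · have := (h₁ j).mp hz; have := (h₂ j).mp hz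
      nlinarith
  have h0 := hf v₂ hv₂ker
  simpa [w, h0, hpos.ne'] using hw

lemma signPatterns_tail_subset_insert (f : Fin (n + 1) → Dual ℝ V) {u : V} (hu0 : f 0 u ≠ 0)
    (hu : ∀ j : Fin n, f j.succ u = 0) :
    signPatterns (Fin.tail f) ⊆ insert (fun _ => false) (signPatterns (restrictKer f)) := by
  rintro _ ⟨v, hv, rfl⟩
  set w := v - (f 0 v / f 0 u) • u
  have hw0 : f 0 w = 0 := by simp [w, hu0]
  have hwj : ∀ j : Fin n, f j.succ w = f j.succ v := by simp [w, hu]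
  by_cases hw : w = 0
  · left
    funext j
    simp [signPattern, Fin.tail, ← hwj, hw]
  · right
    refine ⟨⟨w, hw0⟩, fun h => hw (congrArg Subtype.val h), funext fun j => ?_⟩
    simp only [signPattern, restrictKer, LinearMap.domRestrict_apply, hwj, Fin.tail]
    rfl

lemma ncard_signPatterns_le [FiniteDimensional ℝ V] (f : Fin m → Dual ℝ V) :
    (signPatterns f).ncard ≤ coverNumber m (finrank ℝ V) := by
  induction m generalizing V with
  | zero =>
    rcases Nat.eq_zero_or_pos (finrank ℝ V) with hV | hV
    · simp [signPatterns_eq_empty hV]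
    · exact (ncard_le_two_pow _).trans (coverNumber.two_pow_le (Nat.zero_le _) hV)
  | succ n ih =>
    rcases Nat.eq_zero_or_pos (finrank ℝ V) with hV | hV
    · simp [signPatterns_eq_empty hV]
    rcases le_or_gt (n + 1) (finrank ℝ V) with hnV | hVn
    · exact (ncard_le_two_pow _).trans (coverNumber.two_pow_le hnV hV)
    have htail : (Fin.tail '' signPatterns f).ncard ≤ coverNumber n (finrank ℝ V) :=
      (Set.ncard_le_ncard (image_tail_signPatterns_subset f)).trans (ih (Fin.tail f))
    rw [ncard_eq_ncard_image_tail_add]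
    by_cases h0 : f 0 = 0
    · rw [setOf_forall_cons_mem_signPatterns_eq_empty h0, Set.ncard_empty, add_zero]
      exact htail.trans (coverNumber.le_succ_left n _)
    have hker := Dual.finrank_ker_add_one_of_ne_zero h0
    have hg := ih (restrictKer f)
    rw [← hker] at htail ⊢
    -- If some `u ∉ ker (f 0)` is killed by all the other functionals, the two-way extensions need
    -- not come from `ker (f 0)`, but then `ker (f 0)` carries every pattern of `Fin.tail f`
    -- except possibly the all-`false` one.
    by_cases hspan : ∀ u, (∀ j : Fin n, f j.succ u = 0) → f 0 u = 0
    · rw [coverNumber.succ_succ (by omega)]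
      exact add_le_add htail ((Set.ncard_le_ncard
        (setOf_forall_cons_mem_signPatterns_subset f hspan)).trans hg)
    · push Not at hspan
      obtain ⟨u, hu, hu0⟩ := hspan
      have hT := (Set.ncard_le_ncard ((image_tail_signPatterns_subset f).trans
        (signPatterns_tail_subset_insert f hu0 hu))).trans
        ((Set.ncard_insert_le _ _).trans (Nat.add_le_add_right hg 1))
      have hD := (Set.ncard_le_ncard (setOf_forall_cons_mem_subset_image_tail _)).trans hT
      have hchoose : 0 < (n - 1).choose (finrank ℝ (LinearMap.ker (f 0))) :=
        Nat.choose_pos (by omega)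
      rw [coverNumber.succ_succ_eq_two_mul_add (by omega)]
      omega

end SignPatterns

section PolynomialValues

open Polynomial Finset

variable {n K : ℕ} {s : Finset (Fin n)}

noncomputable def polynomialValues (M K : ℕ) : Submodule ℝ (Fin M → ℝ) :=
  LinearMap.range ((LinearMap.pi fun i : Fin M => leval (i : ℝ)).comp (degreeLT ℝ K).subtype)

lemma finrank_polynomialValues {M : ℕ} (h : K ≤ M) :
    finrank ℝ (polynomialValues M K) = K := by
  rw [polynomialValues, LinearMap.finrank_range_of_inj, (degreeLTEquiv ℝ K).finrank_eq,
    finrank_fin_fun]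
  refine (injective_iff_map_eq_zero _).mpr fun ⟨p, hp⟩ hp0 => Subtype.ext ?_
  refine eq_zero_of_degree_lt_of_eval_finset_eq_zero (univ.image fun i : Fin M => (i : ℝ))
    ?_ ?_
  · have hinj : Function.Injective fun i : Fin M => ((i : ℕ) : ℝ) :=
      Nat.cast_injective.comp Fin.val_injective
    rw [card_image_of_injective _ hinj, card_univ, Fintype.card_fin]
    exact (mem_degreeLT.mp hp).trans_le (by exact_mod_cast h)
  · simpa using fun i => congrFun hp0 i

noncomputable def signChangeVector (b : Bool) (s : Finset (Fin n)) : Fin (n + 1) → ℝ :=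
  fun i => (bif b then 1 else -1) * ∏ l ∈ s, ((i : ℝ) - ((l : ℕ) + 1 / 2))

lemma signChangeVector_mem (b : Bool) (hs : s.card < K) :
    signChangeVector b s ∈ polynomialValues (n + 1) K := by
  have hprod : ∏ l ∈ s, (X - C (((l : ℕ) : ℝ) + 1 / 2)) ∈ degreeLT ℝ K := by
    rw [mem_degreeLT, degree_prod]
    simp only [degree_X_sub_C, sum_const, nsmul_eq_mul, mul_one]
    exact_mod_cast hs
  refine ⟨⟨(bif b then 1 else -1 : ℝ) • _, Submodule.smul_mem _ _ hprod⟩,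
    funext fun i => ?_⟩
  simp [signChangeVector, eval_prod]

lemma signChangeVector_ne_zero (b : Bool) (s : Finset (Fin n)) (i : Fin (n + 1)) :
    signChangeVector b s i ≠ 0 := by
  refine mul_ne_zero (by cases b <;> norm_num) (prod_ne_zero_iff.mpr fun l _ h => ?_)
  have : (2 * i : ℝ) = 2 * l + 1 := by linarith
  have : 2 * (i : ℕ) = 2 * l + 1 := by exact_mod_cast this
  omega

lemma signChangeVector_mul_neg_iff (b : Bool) (s : Finset (Fin n)) (j : Fin n) :
    signChangeVector b s j.castSucc * signChangeVector b s j.succ < 0 ↔ j ∈ s := by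
  have hfactor : ∀ l : Fin n, l ≠ j →
      0 < ((j : ℝ) - ((l : ℕ) + 1 / 2)) * (((j : ℕ) + 1 : ℝ) - ((l : ℕ) + 1 / 2)) := by
    intro l hl
    rcases Nat.lt_or_gt_of_ne (Fin.val_ne_of_ne hl) with h | h
    · have : ((l : ℕ) : ℝ) + 1 ≤ j := by exact_mod_cast h
      nlinarith
    · have : ((j : ℕ) : ℝ) + 1 ≤ l := by exact_mod_cast h
      nlinarith
  have hsign : (bif b then 1 else -1 : ℝ) * (bif b then 1 else -1) = 1 := by cases b <;> norm_num
  simp only [signChangeVector, mul_mul_mul_comm _ (∏ l ∈ s, _), hsign, one_mul,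
    Fin.val_castSucc, Fin.val_succ, Nat.cast_add, Nat.cast_one, ← prod_mul_distrib]
  constructor
  · intro hneg
    by_contra hj
    exact (prod_pos fun l hl => hfactor l (ne_of_mem_of_not_mem hl hj)).not_gt hneg
  · intro hj
    rw [← mul_prod_erase _ _ hj]
    exact mul_neg_of_neg_of_pos (by norm_num)
      (prod_pos fun l hl => hfactor l (ne_of_mem_erase hl))

lemma decide_pos_eq_decide_pos_iff {x y : ℝ} (hx : x ≠ 0) (hy : y ≠ 0) :
    decide (0 < x) = decide (0 < y) ↔ 0 < x * y := by
  rw [decide_eq_decide, mul_pos_iff]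
  rcases hx.lt_or_gt with hx | hx <;> rcases hy.lt_or_gt with hy | hy <;>
    simp [hx, hy, hx.le, hy.le, not_lt.mpr]

lemma card_filter_card_lt (n K : ℕ) :
    #{s : Finset (Fin n) | s.card < K} = ∑ j ∈ range K, n.choose j := by
  rw [card_eq_sum_card_fiberwise (f := card) (t := range K) fun s hs => by simpa using hs]
  refine sum_congr rfl fun j hj => ?_
  have h := card_powersetCard j (univ : Finset (Fin n))
  rw [card_univ, Fintype.card_fin] at h
  rw [← h, filter_filter]
  congr 1
  ext s
  simp only [mem_filter, mem_univ, true_and, mem_powersetCard_univ, and_iff_right_iff_imp]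
  rintro rfl
  exact mem_range.mp hj

noncomputable def signChangePattern (b : Bool) (s : Finset (Fin n)) : Fin (n + 1) → Bool :=
  fun i => decide (0 < signChangeVector b s i)

lemma signChangePattern_mem (b : Bool) (hs : s.card < K) :
    signChangePattern b s ∈ intersectedOrthants (n + 1) (polynomialValues (n + 1) K) :=
  ⟨_, signChangeVector_mem b hs, fun h => signChangeVector_ne_zero b s 0 (congrFun h 0),
    fun i => by simp [signChangePattern]⟩

lemma signChangePattern_ne_iff (b : Bool) (s : Finset (Fin n)) (j : Fin n) :
    signChangePattern b s j.castSucc ≠ signChangePattern b s j.succ ↔ j ∈ s := by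
  rw [signChangePattern, signChangePattern, ne_eq, decide_pos_eq_decide_pos_iff
    (signChangeVector_ne_zero _ _ _) (signChangeVector_ne_zero _ _ _),
    ← signChangeVector_mul_neg_iff b s j, not_lt]
  exact ⟨fun h => h.lt_of_ne (mul_ne_zero (signChangeVector_ne_zero _ _ _)
    (signChangeVector_ne_zero _ _ _)), le_of_lt⟩

lemma signChangePattern_injective :
    Function.Injective fun p : Bool × Finset (Fin n) => signChangePattern p.1 p.2 := by
  rintro ⟨b, s⟩ ⟨b', s'⟩ (h : signChangePattern b s = signChangePattern b' s')
  obtain rfl : s = s' := by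
    ext j
    rw [← signChangePattern_ne_iff b, ← signChangePattern_ne_iff b', h]
  have h0 := congrFun h 0
  rw [signChangePattern, signChangePattern, decide_pos_eq_decide_pos_iff
    (signChangeVector_ne_zero _ _ _) (signChangeVector_ne_zero _ _ _)] at h0
  have hprod := signChangeVector_ne_zero true s 0
  cases b <;> cases b' <;>
    simp only [signChangeVector, cond_true, cond_false, one_mul] at h0 hprod ⊢ <;>
    nlinarith [sq_pos_of_ne_zero hprod]

lemma coverNumber_le_ncard_intersectedOrthants (n K : ℕ) :
    coverNumber (n + 1) K ≤
      (intersectedOrthants (n + 1) (polynomialValues (n + 1) K)).ncard := by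
  classical
  let P := (univ ×ˢ ({s | s.card < K} : Finset (Finset (Fin n)))).image
    fun p : Bool × Finset (Fin n) => signChangePattern p.1 p.2
  have hP : (P : Set (Fin (n + 1) → Bool)) ⊆
      intersectedOrthants (n + 1) (polynomialValues (n + 1) K) := by
    intro z hz
    obtain ⟨⟨b, s⟩, hs, rfl⟩ := mem_image.mp hz
    exact signChangePattern_mem b (mem_filter.mp (mem_product.mp hs).2).2
  calc coverNumber (n + 1) K = #P := by
        rw [card_image_of_injective _ signChangePattern_injective, card_product,
          card_filter_card_lt, coverNumber, Nat.add_sub_cancel, card_univ, Fintype.card_bool]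
    _ = (P : Set (Fin (n + 1) → Bool)).ncard := (Set.ncard_coe_finset P).symm
    _ ≤ _ := Set.ncard_le_ncard hP

end PolynomialValues

section MaxOrthants

lemma intersectedOrthants_eq_signPatterns (M : ℕ) (S : Submodule ℝ (Fin M → ℝ)) :
    intersectedOrthants M S = signPatterns fun i => LinearMap.proj i ∘ₗ S.subtype := by
  ext z
  simp [intersectedOrthants, signPatterns, signPattern_eq_iff, and_left_comm]

lemma maxOrthants_le_coverNumber (M K : ℕ) : maxOrthants M K ≤ coverNumber M K := by
  refine csSup_le' ?_
  rintro _ ⟨S, rfl, rfl⟩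
  rw [intersectedOrthants_eq_signPatterns]
  exact ncard_signPatterns_le _

lemma coverNumber_le_maxOrthants {n K : ℕ} (hK : K ≤ n + 1) :
    coverNumber (n + 1) K ≤ maxOrthants (n + 1) K :=
  (coverNumber_le_ncard_intersectedOrthants n K).trans <|
    le_csSup ⟨2 ^ (n + 1), by rintro _ ⟨S, -, rfl⟩; exact ncard_le_two_pow _⟩
      ⟨_, finrank_polynomialValues hK, rfl⟩

lemma maxOrthants_eq_zero_of_lt {M K : ℕ} (h : M < K) : maxOrthants M K = 0 := by
  refine (csSup_le' ?_).antisymm (Nat.zero_le _)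
  rintro _ ⟨S, hS, -⟩
  have := Submodule.finrank_le S
  rw [finrank_fin_fun] at this
  omega

lemma maxOrthants_le_mul_maxOrthants {M K : ℕ} (hK : 2 ≤ K) :
    (maxOrthants M K : ℝ) ≤ 2 * M / K * maxOrthants (M - 1) (K - 1) := by
  rcases lt_or_ge M K with hMK | hKM
  · rw [maxOrthants_eq_zero_of_lt hMK, Nat.cast_zero]
    positivity
  obtain ⟨m, rfl⟩ : ∃ m, M = m + 1 := ⟨M - 1, by omega⟩
  obtain ⟨k, rfl⟩ : ∃ k, K = k + 1 := ⟨K - 1, by omega⟩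
  have hrec : (k + 1) * coverNumber (m + 1) (k + 1) ≤ 2 * (m + 1) * maxOrthants m k := by
    obtain ⟨n, rfl⟩ : ∃ n, m = n + 1 := ⟨m - 1, by omega⟩
    exact (coverNumber.mul_succ_succ_le (by omega) (by omega)).trans
      (Nat.mul_le_mul_left _ (coverNumber_le_maxOrthants (by omega)))
  rw [Nat.add_sub_cancel, Nat.add_sub_cancel, div_mul_eq_mul_div, le_div_iff₀ (by positivity)]
  calc (maxOrthants (m + 1) (k + 1) : ℝ) * ((k + 1 : ℕ) : ℝ)
      ≤ (k + 1 : ℕ) * coverNumber (m + 1) (k + 1) := by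
        rw [mul_comm]; gcongr; exact_mod_cast maxOrthants_le_coverNumber _ _
    _ ≤ 2 * ((m + 1 : ℕ) : ℝ) * maxOrthants m k := by exact_mod_cast hrec

lemma maxOrthants_le_two_pow_mul_choose (M K : ℕ) :
    (maxOrthants M K : ℝ) ≤ 2 ^ K / ((M : ℝ) - K + 1) * M.choose K := by
  induction K generalizing M with
  | zero =>
    have h := maxOrthants_le_coverNumber M 0
    rw [coverNumber.zero_right, Nat.le_zero] at h
    rw [h]
    simp only [Nat.cast_zero, pow_zero, sub_zero, Nat.choose_zero_right, Nat.cast_one, mul_one]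
    positivity
  | succ k ih =>
    rcases lt_or_ge M (k + 1) with hMk | hkM
    · simp [maxOrthants_eq_zero_of_lt hMk, Nat.choose_eq_zero_of_lt hMk]
    obtain ⟨m, rfl⟩ : ∃ m, M = m + 1 := ⟨M - 1, by omega⟩
    rcases Nat.eq_zero_or_pos k with rfl | hk
    · have h := maxOrthants_le_coverNumber (m + 1) 1
      rw [coverNumber.one_right] at h
      simp only [Nat.choose_one_right, zero_add, pow_one]
      push_cast
      rw [sub_add_cancel, div_mul_cancel₀ _ (by positivity)]
      exact_mod_cast h
    have hchoose : ((m + 1 : ℕ) : ℝ) * m.choose k = (m + 1).choose (k + 1) * (k + 1 : ℕ) := by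
      exact_mod_cast Nat.add_one_mul_choose_eq m k
    calc (maxOrthants (m + 1) (k + 1) : ℝ)
        ≤ 2 * (m + 1 : ℕ) / (k + 1 : ℕ) * maxOrthants m k :=
          maxOrthants_le_mul_maxOrthants (by omega)
      _ ≤ 2 * (m + 1 : ℕ) / (k + 1 : ℕ) * (2 ^ k / ((m : ℝ) - k + 1) * m.choose k) := by
          gcongr; exact ih m
      _ = 2 ^ (k + 1) / ((m : ℝ) - k + 1) * ((m + 1 : ℕ) * m.choose k / (k + 1 : ℕ)) := by
          ring
      _ = 2 ^ (k + 1) / (((m + 1 : ℕ) : ℝ) - (k + 1 : ℕ) + 1) * (m + 1).choose (k + 1) := by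
          rw [hchoose, mul_div_cancel_right₀ _ (by positivity)]
          push_cast
          ring_nf

end MaxOrthants

theorem maxOrthants_recursion_and_bound_general (M K : ℕ) :
    (2 ≤ K →
      (maxOrthants M K : ℝ) ≤ 2 * M / K * maxOrthants (M - 1) (K - 1)) ∧
    (maxOrthants M K : ℝ) ≤ 2 ^ K / ((M : ℝ) - K + 1) * Nat.choose M K :=
  ⟨maxOrthants_le_mul_maxOrthants, maxOrthants_le_two_pow_mul_choose M K⟩

theorem maxOrthants_recursion_and_bound (M K : ℕ) (hK : 1 ≤ K) (hKM : K ≤ M) :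
    (2 ≤ K →
      (maxOrthants M K : ℝ) ≤ 2 * M / K * maxOrthants (M - 1) (K - 1)) ∧
    (maxOrthants M K : ℝ) ≤ 2 ^ K / ((M : ℝ) - K + 1) * Nat.choose M K :=
  maxOrthants_recursion_and_bound_general M K
end

section
/- The half-integral of a standard Gaussian sign-flip probability: if y ~ N(0, a²) and n ~ N(0, σ²) are independent real Gaussian random variables with a > 0, then P((y+n)·y < 0) ≤ (1/2)·σ/√(a² + σ²). -/
open MeasureTheory ProbabilityTheory Real Set NNReal

lemma gauss_half (v : ℝ≥0) (hv : v ≠ 0) : gaussianReal 0 v (Set.Ioi 0) ≤ 1/2 := by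
  have hsymm : (gaussianReal 0 v).map (fun x => (-1 : ℝ) * x) = gaussianReal 0 v := by
    rw [show (fun x => (-1:ℝ) * x) = ((-1:ℝ) * ·) from rfl, gaussianReal_map_const_mul (-1)]
    norm_num
  have hIio : gaussianReal 0 v (Set.Iio 0) = gaussianReal 0 v (Set.Ioi 0) := by
    conv_lhs => rw [← hsymm]
    rw [Measure.map_apply (by fun_prop) measurableSet_Iio]
    congr 1
    ext x
    simp
  have hsum : gaussianReal 0 v (Set.Ioi 0) + gaussianReal 0 v (Set.Iio 0) ≤ 1 := by
    rw [← measure_union (by rw [Set.disjoint_left]; intro x hx hx'; simp at hx hx'; linarith)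
      measurableSet_Iio]
    exact prob_le_one
  rw [hIio] at hsum
  rw [ENNReal.le_div_iff_mul_le (by norm_num) (by norm_num), mul_two]
  exact hsum

lemma gauss_shift (v : ℝ≥0) (t : ℝ) : gaussianReal t v (Set.Ioi t) = gaussianReal 0 v (Set.Ioi 0) := by
  rw [← zero_add t, ← gaussianReal_map_add_const t,
    Measure.map_apply (by fun_prop) measurableSet_Ioi]
  congr 1
  ext x
  simp

lemma gauss_tail (v : ℝ≥0) (hv : v ≠ 0) (t : ℝ) (ht : 0 ≤ t) :
    gaussianReal 0 v (Set.Ioi t) ≤ ENNReal.ofReal (2⁻¹ * Real.exp (-t^2/(2*v))) := by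
  rw [gaussianReal_apply 0 hv]
  have hpt : ∀ x ∈ Set.Ioi t, gaussianPDF 0 v x ≤
      ENNReal.ofReal (Real.exp (-t^2/(2*v))) * gaussianPDF t v x := by
    intro x hx
    simp only [Set.mem_Ioi] at hx
    rw [gaussianPDF, gaussianPDF, ← ENNReal.ofReal_mul (Real.exp_nonneg _)]
    apply ENNReal.ofReal_le_ofReal
    rw [gaussianPDFReal, gaussianPDFReal, mul_left_comm, ← Real.exp_add]
    apply mul_le_mul_of_nonneg_left _ (by positivity)
    apply Real.exp_le_exp.mpr
    have hv' : (0:ℝ) < v := by positivity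
    rw [div_add_div _ _ (by positivity) (by positivity), div_le_div_iff₀ (by positivity) (by positivity)]
    nlinarith [mul_nonneg (mul_nonneg ht (sub_nonneg.mpr hx.le)) (mul_pos hv' hv').le]
  calc ∫⁻ x in Set.Ioi t, gaussianPDF 0 v x
      ≤ ∫⁻ x in Set.Ioi t, ENNReal.ofReal (Real.exp (-t^2/(2*v))) * gaussianPDF t v x := by
        apply setLIntegral_mono ((measurable_gaussianPDF t v).const_mul _) hpt
    _ = ENNReal.ofReal (Real.exp (-t^2/(2*v))) * gaussianReal t v (Set.Ioi t) := by
        rw [lintegral_const_mul _ (measurable_gaussianPDF t v), gaussianReal_apply t hv]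
    _ ≤ ENNReal.ofReal (Real.exp (-t^2/(2*v))) * (1/2) := by
        apply mul_le_mul_right
        rw [gauss_shift]
        exact gauss_half v hv
    _ = ENNReal.ofReal (2⁻¹ * Real.exp (-t^2/(2*v))) := by
        rw [ENNReal.ofReal_mul (by norm_num), mul_comm]
        congr 1
        rw [ENNReal.ofReal_inv_of_pos (by norm_num)]
        norm_num


lemma gauss_int (a σ : ℝ) (ha : 0 < a) (hσ : 0 < σ) :
    ∫⁻ u, ENNReal.ofReal (2⁻¹ * Real.exp (-u^2/(2*σ^2))) ∂(gaussianReal 0 (a^2).toNNReal)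
      = ENNReal.ofReal (σ / (2 * Real.sqrt (a^2+σ^2))) := by
  have hva : ((a^2).toNNReal : ℝ) = a^2 := Real.coe_toNNReal _ (sq_nonneg a)
  have hva0 : (a^2).toNNReal ≠ 0 := by
    simp only [ne_eq, Real.toNNReal_eq_zero, not_le]
    positivity
  set b : ℝ := 1/(2*a^2) + 1/(2*σ^2) with hb
  have hbpos : 0 < b := by positivity
  have key : ∀ u : ℝ, gaussianPDFReal 0 (a^2).toNNReal u * (2⁻¹ * Real.exp (-u^2/(2*σ^2)))
      = (2⁻¹ * (Real.sqrt (2*π*a^2))⁻¹) * Real.exp (-b * u^2) := by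
    intro u
    rw [gaussianPDFReal, hva]
    have e : Real.exp (-(u-0)^2/(2*a^2)) * Real.exp (-u^2/(2*σ^2)) = Real.exp (-b*u^2) := by
      rw [← Real.exp_add]
      congr 1
      rw [hb]
      field_simp
      ring
    linear_combination (2⁻¹ * (Real.sqrt (2*π*a^2))⁻¹) * e
  rw [gaussianReal_of_var_ne_zero 0 hva0]
  rw [lintegral_withDensity_eq_lintegral_mul _ (measurable_gaussianPDF _ _) (by fun_prop)]
  have heq : ∀ u : ℝ, (gaussianPDF 0 (a^2).toNNReal * fun u => ENNReal.ofReal (2⁻¹ * Real.exp (-u^2/(2*σ^2)))) u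
      = ENNReal.ofReal ((2⁻¹ * (Real.sqrt (2*π*a^2))⁻¹) * Real.exp (-b * u^2)) := by
    intro u
    simp only [Pi.mul_apply, gaussianPDF,
      ← ENNReal.ofReal_mul (gaussianPDFReal_nonneg _ _ _), key u]
  simp_rw [heq]
  rw [← ofReal_integral_eq_lintegral_ofReal
    (((integrable_exp_neg_mul_sq hbpos).const_mul _)) (ae_of_all _ fun u => by positivity)]
  rw [integral_const_mul, integral_gaussian]
  congr 1
  rw [← Real.sqrt_inv, mul_assoc, ← Real.sqrt_mul (by positivity)]
  have harg : (2*π*a^2)⁻¹ * (π / b) = σ^2 / (a^2+σ^2) := by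
    rw [hb]; field_simp; ring
  rw [harg, Real.sqrt_div (sq_nonneg σ), Real.sqrt_sq hσ.le]
  field_simp


lemma gauss_Iio_neg (v : ℝ≥0) (t : ℝ) :
    gaussianReal 0 v (Set.Iio (-t)) = gaussianReal 0 v (Set.Ioi t) := by
  have hsymm : (gaussianReal 0 v).map (fun x => (-1 : ℝ) * x) = gaussianReal 0 v := by
    rw [show (fun x => (-1:ℝ) * x) = ((-1:ℝ) * ·) from rfl, gaussianReal_map_const_mul (-1)]
    norm_num
  conv_lhs => rw [← hsymm]
  rw [Measure.map_apply (by fun_prop) measurableSet_Iio]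
  congr 1
  ext x
  simp

theorem gaussian_sign_flip_prob (a σ : ℝ) (ha : 0 < a) (hσ : 0 < σ)
    {Ω : Type*} [MeasurableSpace Ω] (μ : Measure Ω) [IsProbabilityMeasure μ]
    (y n : Ω → ℝ) (hind : IndepFun y n μ)
    (hy : μ.map y = gaussianReal 0 (a ^ 2).toNNReal)
    (hn : μ.map n = gaussianReal 0 (σ ^ 2).toNNReal) :
    μ {ω | (y ω + n ω) * y ω < 0} ≤
      ENNReal.ofReal (σ / (2 * Real.sqrt (a ^ 2 + σ ^ 2))) := by
  have hvσ : (((σ^2).toNNReal : ℝ≥0) : ℝ) = σ^2 := Real.coe_toNNReal _ (sq_nonneg σ)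
  have hvσ0 : (σ^2).toNNReal ≠ 0 := by
    simp only [ne_eq, Real.toNNReal_eq_zero, not_le]; positivity
  have hym : AEMeasurable y μ := by
    by_contra h
    rw [Measure.map_of_not_aemeasurable h] at hy
    have h1 : (0 : Measure ℝ) Set.univ = 1 := by rw [hy]; exact measure_univ
    simp at h1
  have hnm : AEMeasurable n μ := by
    by_contra h
    rw [Measure.map_of_not_aemeasurable h] at hn
    have h1 : (0 : Measure ℝ) Set.univ = 1 := by rw [hn]; exact measure_univ
    simp at h1
  have hmap : μ.map (fun ω => (y ω, n ω)) = (μ.map y).prod (μ.map n) :=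
    (indepFun_iff_map_prod_eq_prod_map_map hym hnm).mp hind
  have hS : MeasurableSet {p : ℝ × ℝ | (p.1 + p.2) * p.1 < 0} :=
    measurableSet_lt (by fun_prop) measurable_const
  have h0 : μ {ω | (y ω + n ω) * y ω < 0}
      = ((gaussianReal 0 (a^2).toNNReal).prod (gaussianReal 0 (σ^2).toNNReal))
          {p : ℝ × ℝ | (p.1 + p.2) * p.1 < 0} := by
    rw [← hy, ← hn, ← hmap, Measure.map_apply_of_aemeasurable (hym.prodMk hnm) hS]
    rfl
  rw [h0, Measure.prod_apply hS]
  have hslice : ∀ u : ℝ,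
      gaussianReal 0 (σ^2).toNNReal (Prod.mk u ⁻¹' {p : ℝ × ℝ | (p.1 + p.2) * p.1 < 0})
        ≤ ENNReal.ofReal (2⁻¹ * Real.exp (-u^2/(2*σ^2))) := by
    intro u
    rcases lt_trichotomy u 0 with hu | hu | hu
    · have hset : (Prod.mk u ⁻¹' {p : ℝ × ℝ | (p.1 + p.2) * p.1 < 0}) = Set.Ioi (-u) := by
        ext v
        simp only [Set.mem_preimage, Set.mem_setOf_eq, Set.mem_Ioi]
        constructor
        · intro h
          nlinarith
        · intro h
          nlinarith
      rw [hset]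
      have := gauss_tail (σ^2).toNNReal hvσ0 (-u) (by linarith)
      rw [hvσ, neg_sq] at this
      exact this
    · have hset : (Prod.mk u ⁻¹' {p : ℝ × ℝ | (p.1 + p.2) * p.1 < 0}) = ∅ := by
        ext v
        simp [hu]
      rw [hset]
      simp only [measure_empty]
      positivity
    · have hset : (Prod.mk u ⁻¹' {p : ℝ × ℝ | (p.1 + p.2) * p.1 < 0}) = Set.Iio (-u) := by
        ext v
        simp only [Set.mem_preimage, Set.mem_setOf_eq, Set.mem_Iio]
        constructor
        · intro h
          nlinarith
        · intro h
          nlinarith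
      rw [hset, gauss_Iio_neg]
      have := gauss_tail (σ^2).toNNReal hvσ0 u hu.le
      rwa [hvσ] at this
  calc ∫⁻ u, gaussianReal 0 (σ^2).toNNReal
          (Prod.mk u ⁻¹' {p : ℝ × ℝ | (p.1 + p.2) * p.1 < 0}) ∂(gaussianReal 0 (a^2).toNNReal)
      ≤ ∫⁻ u, ENNReal.ofReal (2⁻¹ * Real.exp (-u^2/(2*σ^2))) ∂(gaussianReal 0 (a^2).toNNReal) :=
        lintegral_mono hslice
    _ = ENNReal.ofReal (σ / (2 * Real.sqrt (a^2+σ^2))) := gauss_int a σ ha hσ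
end

section
/- The vector (1/2)·Φᵀ(sign(Φx) - ȳ) is a subgradient at x of the convex function J(x) = ‖[ȳ ⊙ (Φx)]₋‖₁, the one-sided ℓ1 consistency penalty. -/
/-- The sign function used in 1-bit compressive sensing: `1` if positive, `-1` otherwise. -/
noncomputable def rsign (t : ℝ) : ℝ := if 0 < t then 1 else -1

theorem subgradient_one_sided_l1 (M N : ℕ) (Φ : Matrix (Fin M) (Fin N) ℝ)
    (ybar : Fin M → ℝ) (hy : ∀ i, ybar i = 1 ∨ ybar i = -1) (x : Fin N → ℝ) :
    ∀ u : Fin N → ℝ,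
      (∑ i, max 0 (-(ybar i * Φ.mulVec x i))) +
        ∑ j, ((1 / 2) * Φ.transpose.mulVec (fun i => rsign (Φ.mulVec x i) - ybar i) j)
          * (u j - x j) ≤
      ∑ i, max 0 (-(ybar i * Φ.mulVec u i)) := by
  intro u
  have hsum : ∑ j, ((1 / 2) * Φ.transpose.mulVec (fun i => rsign (Φ.mulVec x i) - ybar i) j)
          * (u j - x j)
      = ∑ i, (1 / 2) * (rsign (Φ.mulVec x i) - ybar i) * (Φ.mulVec u i - Φ.mulVec x i) := by
    simp only [Matrix.mulVec, Matrix.transpose_apply, dotProduct,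
      ← Finset.sum_sub_distrib, Finset.mul_sum, Finset.sum_mul]
    rw [Finset.sum_comm]
    exact Finset.sum_congr rfl fun i _ => Finset.sum_congr rfl fun j _ => by ring
  rw [hsum, ← Finset.sum_add_distrib]
  apply Finset.sum_le_sum
  intro i _
  set a := Φ.mulVec x i with ha
  set b := Φ.mulVec u i with hb
  have h1 := le_max_left 0 (-(ybar i * b))
  have h2 := le_max_right 0 (-(ybar i * b))
  rcases hy i with h | h <;> rw [h] at h1 h2 ⊢ <;> unfold rsign <;> split_ifs with hpos
  · rw [max_eq_left (by linarith)]; linarith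
  · rw [max_eq_right (by push_neg at hpos; linarith)]; linarith
  · rw [max_eq_right (by linarith)]; linarith
  · rw [max_eq_left (by push_neg at hpos; linarith)]; linarith
end
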